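/- Let V, n : ℝ³ → ℝ³ be vector fields differentiable at a point x, with ‖n(y)‖ = 1 for all y ∈ ℝ³. Then div V(x) − ⟨n(x), DV(x)·n(x)⟩ = ⟨n(x), V(x)⟩ · div n(x) − ⟨curl(V × n)(x), n(x)⟩, where V × n is the pointwise cross product, curl W = (∂₂W₃ − ∂₃W₂, ∂₃W₁ − ∂₁W₃, ∂₁W₂ − ∂₂W₁) with ∂ᵢ denoting the partial derivatives obtained from the Fréchet derivative of W = V × n at x, div is the trace of the Fréchet derivative, and DV(x) is the Fréchet derivative of V. -/

import Mathlib

open scoped RealInnerProductSpace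

noncomputable section

/-- The divergence of a vector field: the trace of its Fréchet derivative. -/
def diverg (V : EuclideanSpace ℝ (Fin 3) → EuclideanSpace ℝ (Fin 3))
    (x : EuclideanSpace ℝ (Fin 3)) : ℝ :=
  LinearMap.trace ℝ (EuclideanSpace ℝ (Fin 3)) (fderiv ℝ V x).toLinearMap

/-- The cross product on `ℝ³`. -/
def cross (a b : EuclideanSpace ℝ (Fin 3)) : EuclideanSpace ℝ (Fin 3) :=
  (WithLp.equiv 2 (Fin 3 → ℝ)).symm
    ![a 1 * b 2 - a 2 * b 1, a 2 * b 0 - a 0 * b 2, a 0 * b 1 - a 1 * b 0]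

/-- The curl of a vector field on `ℝ³`, with the partial derivatives obtained from the
Fréchet derivative. -/
def curl (W : EuclideanSpace ℝ (Fin 3) → EuclideanSpace ℝ (Fin 3))
    (x : EuclideanSpace ℝ (Fin 3)) : EuclideanSpace ℝ (Fin 3) :=
  let D : Fin 3 → Fin 3 → ℝ := fun i j => fderiv ℝ W x (EuclideanSpace.single i 1) j
  (WithLp.equiv 2 (Fin 3 → ℝ)).symm
    ![D 1 2 - D 2 1, D 2 0 - D 0 2, D 0 1 - D 1 0]

lemma trace_eq_sum (A : EuclideanSpace ℝ (Fin 3) →L[ℝ] EuclideanSpace ℝ (Fin 3)) :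
    LinearMap.trace ℝ (EuclideanSpace ℝ (Fin 3)) A.toLinearMap
      = ∑ i : Fin 3, A (EuclideanSpace.single i 1) i := by
  rw [LinearMap.trace_eq_matrix_trace ℝ ((EuclideanSpace.basisFun (Fin 3) ℝ).toBasis)
      A.toLinearMap]
  simp [Matrix.trace, Matrix.diag, LinearMap.toMatrix_apply,
    EuclideanSpace.basisFun_apply, EuclideanSpace.basisFun_repr]

/-- Equivalence in `ℝ³` of the stretch rate formula (Su1) of the paper with the
Matalon–Matkowsky formula (Su2), as claimed in Remark A.1:
`div V − n·DV·n = (n·V) div n − curl(V × n)·n`. -/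
theorem stretch_rate_equals_matalon_matkowsky
    (V n : EuclideanSpace ℝ (Fin 3) → EuclideanSpace ℝ (Fin 3))
    (x : EuclideanSpace ℝ (Fin 3))
    (hV : DifferentiableAt ℝ V x) (hn : DifferentiableAt ℝ n x)
    (hunit : ∀ y, ‖n y‖ = 1) :
    diverg V x - ⟪n x, fderiv ℝ V x (n x)⟫
      = ⟪n x, V x⟫ * diverg n x - ⟪curl (fun y => cross (V y) (n y)) x, n x⟫ := by
  classical
  have hVi : ∀ i, DifferentiableAt ℝ (fun y => V y i) x := differentiableAt_euclidean.1 hV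
  have hni : ∀ i, DifferentiableAt ℝ (fun y => n y i) x := differentiableAt_euclidean.1 hn
  have coord : ∀ (F : EuclideanSpace ℝ (Fin 3) → EuclideanSpace ℝ (Fin 3)),
      DifferentiableAt ℝ F x → ∀ (u : EuclideanSpace ℝ (Fin 3)) (i : Fin 3),
      fderiv ℝ F x u i = fderiv ℝ (fun y => F y i) x u := by
    intro F hF u i
    have h : (fun y => F y i) = (EuclideanSpace.proj (𝕜 := ℝ) i) ∘ F := rfl
    rw [h, fderiv_comp x (EuclideanSpace.proj i).differentiableAt hF,
      ContinuousLinearMap.fderiv]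
    rfl
  set W : EuclideanSpace ℝ (Fin 3) → EuclideanSpace ℝ (Fin 3) :=
    fun y => cross (V y) (n y) with hWdef
  have hcomp : ∀ i : Fin 3,
      (fun y => W y i) = fun y => V y (i+1) * n y (i+2) - V y (i+2) * n y (i+1) := by
    intro i
    funext y
    fin_cases i <;> simp [hWdef, cross]
  have hW : DifferentiableAt ℝ W x := by
    refine differentiableAt_euclidean.2 fun i => ?_
    rw [hcomp i]
    exact ((hVi _).mul (hni _)).sub ((hVi _).mul (hni _))
  -- key product-rule computation
  have key : ∀ (p q r s : Fin 3) (u : EuclideanSpace ℝ (Fin 3)),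
      fderiv ℝ (fun y => V y p * n y q - V y r * n y s) x u
        = (fderiv ℝ V x u p * n x q + V x p * fderiv ℝ n x u q)
          - (fderiv ℝ V x u r * n x s + V x r * fderiv ℝ n x u s) := by
    intro p q r s u
    rw [fderiv_fun_sub ((hVi p).fun_mul (hni q)) ((hVi r).fun_mul (hni s)),
      fderiv_fun_mul (hVi p) (hni q), fderiv_fun_mul (hVi r) (hni s)]
    simp [coord V hV, coord n hn]
    ring
  have hD : ∀ i j : Fin 3, fderiv ℝ W x (EuclideanSpace.single i 1) j
      = (fderiv ℝ V x (EuclideanSpace.single i 1) (j+1) * n x (j+2)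
          + V x (j+1) * fderiv ℝ n x (EuclideanSpace.single i 1) (j+2))
        - (fderiv ℝ V x (EuclideanSpace.single i 1) (j+2) * n x (j+1)
          + V x (j+2) * fderiv ℝ n x (EuclideanSpace.single i 1) (j+1)) := by
    intro i j
    rw [coord W hW, hcomp j, key]
  -- orthogonality of n and its derivative
  have horth : ∀ u : EuclideanSpace ℝ (Fin 3),
      n x 0 * fderiv ℝ n x u 0 + n x 1 * fderiv ℝ n x u 1 + n x 2 * fderiv ℝ n x u 2 = 0 := by
    intro u
    have hg : (fun y => (n y 0)^2 + (n y 1)^2 + (n y 2)^2)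
        = fun _ : EuclideanSpace ℝ (Fin 3) => (1:ℝ) := by
      funext y
      have := hunit y
      have h2 : ‖n y‖^2 = 1 := by rw [this]; norm_num
      rw [EuclideanSpace.norm_eq] at h2
      rw [Real.sq_sqrt (by positivity)] at h2
      simpa [Fin.sum_univ_three, sq] using h2
    have hgd : fderiv ℝ (fun y => (n y 0)^2 + (n y 1)^2 + (n y 2)^2) x u = 0 := by
      rw [hg, fderiv_fun_const]; simp
    have expand : fderiv ℝ (fun y => (n y 0)^2 + (n y 1)^2 + (n y 2)^2) x u
        = 2 * n x 0 * fderiv ℝ n x u 0 + 2 * n x 1 * fderiv ℝ n x u 1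
          + 2 * n x 2 * fderiv ℝ n x u 2 := by
      simp only [sq]
      rw [fderiv_fun_add (((hni 0).fun_mul (hni 0)).fun_add ((hni 1).fun_mul (hni 1))) ((hni 2).fun_mul (hni 2)),
        fderiv_fun_add ((hni 0).fun_mul (hni 0)) ((hni 1).fun_mul (hni 1)),
        fderiv_fun_mul (hni 0) (hni 0), fderiv_fun_mul (hni 1) (hni 1), fderiv_fun_mul (hni 2) (hni 2)]
      simp [coord n hn]
      ring
    rw [expand] at hgd
    linarith
  -- decompose n x over the standard basis
  have hnx : n x = n x 0 • EuclideanSpace.single (0:Fin 3) (1:ℝ)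
      + n x 1 • EuclideanSpace.single 1 1 + n x 2 • EuclideanSpace.single 2 1 := by
    ext i
    fin_cases i <;> simp [EuclideanSpace.single_apply]
  have hAnx : ∀ i : Fin 3, fderiv ℝ V x (n x) i
      = n x 0 * fderiv ℝ V x (EuclideanSpace.single 0 1) i
        + n x 1 * fderiv ℝ V x (EuclideanSpace.single 1 1) i
        + n x 2 * fderiv ℝ V x (EuclideanSpace.single 2 1) i := by
    intro i
    conv_lhs => rw [hnx]
    simp
  -- expand everything
  simp only [diverg, trace_eq_sum, Fin.sum_univ_three, PiLp.inner_apply,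
    RCLike.inner_apply, conj_trivial, curl]
  simp only [WithLp.equiv_symm_apply, PiLp.toLp_apply, Matrix.cons_val_zero, Matrix.cons_val_one,
    Matrix.head_cons, Matrix.cons_val_two, Matrix.tail_cons]
  rw [hAnx 0, hAnx 1, hAnx 2, hD, hD, hD, hD, hD, hD]
  have h1 := horth (EuclideanSpace.single 0 1)
  have h2 := horth (EuclideanSpace.single 1 1)
  have h3 := horth (EuclideanSpace.single 2 1)
  have hnorm : n x 0 * n x 0 + n x 1 * n x 1 + n x 2 * n x 2 = 1 := by
    have := hunit x
    have h2' : ‖n x‖^2 = 1 := by rw [this]; norm_num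
    rw [EuclideanSpace.norm_eq] at h2'
    rw [Real.sq_sqrt (by positivity)] at h2'
    simpa [Fin.sum_univ_three, sq] using h2'
  simp only [Fin.reduceAdd]
  linear_combination (-(fderiv ℝ V x (EuclideanSpace.single 0 1) 0
      + fderiv ℝ V x (EuclideanSpace.single 1 1) 1
      + fderiv ℝ V x (EuclideanSpace.single 2 1) 2)) * hnorm
    - V x 0 * h1 - V x 1 * h2 - V x 2 * h3


end
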